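/- arXiv:2504.09992 — 2 statements merged into one kernel-verified Lean document; each statement's English description precedes it below -/
import Mathlib

section
/- Let α > 0. There exist a constant C₁ > 0 depending only on α and an integer d > 2 such that the following holds: identifying 𝕋 with [0,2π), for every θ > 0 with (d+1)θ < π/2, the intervals I = (0,θ) and J = (dθ, (d+1)θ) satisfy |J| = |I|, and for every nonnegative integrable function g supported in the Carleson box Q_I and every z ∈ Q_J, one has |(K_α g)(z)| ≥ C₁ |Q_I|^{−α/2} ∫_𝔻 g(λ) dA(λ). -/
open MeasureTheory Complex Set
open scoped ENNReal Real

noncomputable section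

/-- The open unit disk in the complex plane. -/
def unitDisk : Set ℂ := Metric.ball 0 1

/-- The normalized area measure `dA = (1/π) dx dy` on `ℂ`. -/
def dA : Measure ℂ := (ENNReal.ofReal π)⁻¹ • (volume : Measure ℂ)

/-- The Carleson box `Q_I` associated with the arc `I = {e^{iθ} : θ ∈ [t, t + ℓ)}`
of the unit circle: `Q_I = {z ∈ 𝔻 : z/|z| ∈ I, 1 - |I| < |z| < 1}`. -/
def carlesonBox (t ℓ : ℝ) : Set ℂ :=
  {z : ℂ | z ∈ unitDisk ∧ 1 - ℓ < ‖z‖ ∧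
    ∃ θ ∈ Set.Ico t (t + ℓ), z / (‖z‖ : ℂ) = Complex.exp (θ * Complex.I)}

/-- The measure `ω dA` restricted to the unit disk, so that
`wMeasure ω S = |S ∩ 𝔻|_ω = ∫_{S ∩ 𝔻} ω dA`. -/
def wMeasure (ω : ℂ → ℝ) : Measure ℂ :=
  (dA.restrict unitDisk).withDensity fun z => ENNReal.ofReal (ω z)

/-- A weight on the unit disk: a positive integrable function. -/
def IsWeight (ω : ℂ → ℝ) : Prop :=
  (∀ z ∈ unitDisk, 0 < ω z) ∧ IntegrableOn ω unitDisk dA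

/-- The integral operator `K_α` induced by the kernel `(1 - z λ̄)^{-α}`. -/
def Kop (α : ℝ) (f : ℂ → ℂ) (z : ℂ) : ℂ :=
  ∫ w in unitDisk, f w * (1 - z * (starRingEnd ℂ) w) ^ (-(α : ℂ)) ∂dA

/-!
Write `u(w) = 1 - z w̄`. For `z ∈ Q_J` and `w ∈ Q_I` the angle between `z` and `w` lies in
`((d-1)θ, (d+1)θ) ⊂ (0, π/2)`, so `Im u(w) ≤ -dθ/15` while `|u(w)| ≤ (d+3)θ`. On the half-plane
`Im ζ ≤ -dθ/15` the logarithm is `15/(dθ)`-Lipschitz and `Q_I` has diameter at most `2θ`, so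
`arg u(w)` moves by at most `30/d` over `Q_I`. Once `d ≥ 30α`, a single unimodular factor `m`
makes `Re (m u(w)^{-α}) ≥ |u(w)|^{-α}/2 ≥ ((d+3)θ)^{-α}/2` on all of `Q_I`, and integrating
against `g ≥ 0` bounds `|K_α g(z)|` from below. Finally `Q_I` contains a disc of radius `θ/8`,
so `|Q_I|^{α/2} ≥ (θ/8)^α`.
-/

open ComplexConjugate

theorem Convex.norm_log_sub_log_le {s : Set ℂ} (hs : Convex ℝ s) (hslit : s ⊆ slitPlane)
    {δ : ℝ} (hδ : 0 < δ) (hδs : ∀ ζ ∈ s, δ ≤ ‖ζ‖) {u v : ℂ} (hu : u ∈ s) (hv : v ∈ s) :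
    ‖log u - log v‖ ≤ ‖u - v‖ / δ := by
  have := hs.norm_image_sub_le_of_norm_hasDerivWithin_le (f := log) (C := δ⁻¹)
    (fun ζ hζ => (hasDerivAt_log (hslit hζ)).hasDerivWithinAt)
    (fun ζ hζ => by rw [norm_inv]; exact inv_anti₀ hδ (hδs ζ hζ)) hv hu
  rwa [inv_mul_eq_div] at this

theorem Complex.norm_exp_le_two_mul_re_of_abs_im_sub_le {x : ℂ} {τ : ℝ} (h : |x.im - τ| ≤ 1) :
    ‖exp x‖ ≤ 2 * (exp (-τ * I) * exp x).re := by
  have hcos : 1 / 2 ≤ Real.cos (x.im - τ) := by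
    have := Real.one_sub_sq_div_two_le_cos (x := x.im - τ)
    nlinarith [sq_abs (x.im - τ), abs_nonneg (x.im - τ)]
  rw [← Complex.exp_add, Complex.exp_re, Complex.norm_exp]
  have hre : (-τ * I + x).re = x.re := by simp
  have him : (-τ * I + x).im = x.im - τ := by simp; ring
  rw [hre, him]
  nlinarith [Real.exp_pos x.re]

theorem Complex.norm_exp_mul_I_sub_exp_mul_I_le (ψ φ : ℝ) :
    ‖exp (ψ * I) - exp (φ * I)‖ ≤ |ψ - φ| := by
  have h : exp (ψ * I) - exp (φ * I) = exp (φ * I) * (exp (I * (ψ - φ : ℝ)) - 1) := by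
    rw [mul_sub, ← exp_add]; push_cast; ring_nf
  rw [h, norm_mul, norm_exp_ofReal_mul_I, one_mul]
  exact Real.norm_exp_I_mul_ofReal_sub_one_le

theorem Complex.norm_one_sub_ofReal_mul_exp_le {P : ℝ} (hP0 : 0 ≤ P) (hP1 : P ≤ 1) (β : ℝ) :
    ‖1 - P * exp (β * I)‖ ≤ 1 - P + |β| := by
  have hsplit : 1 - P * exp (β * I) = (1 - P : ℝ) + P * (exp (0 * I) - exp (β * I)) := by
    rw [zero_mul, exp_zero]; push_cast; ring
  calc ‖1 - P * exp (β * I)‖ ≤ (1 - P) + P * |0 - β| := by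
        rw [hsplit]
        refine (norm_add_le _ _).trans (add_le_add ?_ ?_)
        · rw [norm_real, Real.norm_of_nonneg (by linarith)]
        · rw [norm_mul, norm_real, Real.norm_of_nonneg hP0]
          exact mul_le_mul_of_nonneg_left
            (by exact_mod_cast norm_exp_mul_I_sub_exp_mul_I_le 0 β) hP0
    _ ≤ 1 - P + |β| := by
        rw [zero_sub, abs_neg]
        nlinarith [abs_nonneg β]

theorem Complex.norm_cpow_neg_ofReal (u : ℂ) (α : ℝ) : ‖u ^ (-(α : ℂ))‖ = ‖u‖ ^ (-α) := by
  rw [← ofReal_neg, norm_cpow_real]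

theorem mul_integral_le_norm_integral_mul {X : Type*} [MeasurableSpace X] {μ : Measure X}
    {g : X → ℝ} {k : X → ℂ} {S : Set X} {m : ℂ} {c M : ℝ} (hm : ‖m‖ ≤ 1) (hg0 : 0 ≤ g)
    (hg : Integrable g μ) (hk : AEStronglyMeasurable k μ) (hgS : ∀ w ∉ S, g w = 0)
    (hkM : ∀ w ∈ S, ‖k w‖ ≤ M) (hc : ∀ w ∈ S, c ≤ (m * k w).re) :
    c * ∫ w, g w ∂μ ≤ ‖∫ w, (g w : ℂ) * k w ∂μ‖ := by
  have hgk : Integrable (fun w => (g w : ℂ) * k w) μ := by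
    refine (hg.const_mul M).mono' ((continuous_ofReal.comp_aestronglyMeasurable
      hg.aestronglyMeasurable).mul hk) (ae_of_all _ fun w => ?_)
    by_cases hw : w ∈ S
    · rw [norm_mul, norm_real, Real.norm_of_nonneg (hg0 w), mul_comm]
      exact mul_le_mul_of_nonneg_right (hkM w hw) (hg0 w)
    · simp [hgS w hw]
  have hpt : ∀ w, c * g w ≤ (m * ((g w : ℂ) * k w)).re := fun w => by
    by_cases hw : w ∈ S
    · rw [mul_left_comm, re_ofReal_mul, mul_comm]
      exact mul_le_mul_of_nonneg_left (hc w hw) (hg0 w)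
    · simp [hgS w hw]
  calc c * ∫ w, g w ∂μ = ∫ w, c * g w ∂μ := (integral_const_mul c _).symm
    _ ≤ ∫ w, (m * ((g w : ℂ) * k w)).re ∂μ :=
        integral_mono (hg.const_mul c) (hgk.const_mul m).re hpt
    _ = (m * ∫ w, (g w : ℂ) * k w ∂μ).re := by
        rw [← integral_const_mul]; exact integral_re (hgk.const_mul m)
    _ ≤ ‖m * ∫ w, (g w : ℂ) * k w ∂μ‖ := re_le_norm _
    _ ≤ ‖∫ w, (g w : ℂ) * k w ∂μ‖ := by
        rw [norm_mul]; exact mul_le_of_le_one_left (norm_nonneg _) hm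

section CarlesonBox

variable {t ℓ : ℝ} {z w : ℂ}

theorem norm_lt_one_of_mem_carlesonBox (hz : z ∈ carlesonBox t ℓ) : ‖z‖ < 1 :=
  mem_ball_zero_iff.1 hz.1

theorem exists_eq_norm_mul_exp_of_mem_carlesonBox (hz : z ∈ carlesonBox t ℓ) :
    ∃ φ ∈ Ico t (t + ℓ), z = ‖z‖ * exp (φ * I) := by
  obtain ⟨-, -, φ, hφ, hzφ⟩ := hz
  refine ⟨φ, hφ, ?_⟩
  have hz0 : (‖z‖ : ℂ) ≠ 0 := by
    rintro h
    rw [h, div_zero] at hzφ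
    exact exp_ne_zero _ hzφ.symm
  rw [← hzφ, mul_div_cancel₀ _ hz0]

theorem mem_carlesonBox_of_arg_mem (hz0 : z ≠ 0) (hz1 : ‖z‖ < 1)
    (hzℓ : 1 - ℓ < ‖z‖) (harg : arg z ∈ Ico t (t + ℓ)) : z ∈ carlesonBox t ℓ := by
  refine ⟨mem_ball_zero_iff.2 hz1, hzℓ, arg z, harg, ?_⟩
  rw [div_eq_iff (ofReal_ne_zero.2 (norm_ne_zero_iff.2 hz0)), mul_comm, norm_mul_exp_arg_mul_I]

theorem norm_sub_le_of_mem_carlesonBox (hz : z ∈ carlesonBox t ℓ) (hw : w ∈ carlesonBox t ℓ) :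
    ‖z - w‖ ≤ 2 * ℓ := by
  obtain ⟨ψ, hψ, hzψ⟩ := exists_eq_norm_mul_exp_of_mem_carlesonBox hz
  obtain ⟨φ, hφ, hwφ⟩ := exists_eq_norm_mul_exp_of_mem_carlesonBox hw
  have hsplit : z - w = (‖z‖ - ‖w‖ : ℝ) * exp (ψ * I) + ‖w‖ * (exp (ψ * I) - exp (φ * I)) := by
    conv_lhs => rw [hzψ, hwφ]
    push_cast; ring
  have hzw : |‖z‖ - ‖w‖| ≤ ℓ := abs_sub_le_iff.2
    ⟨by linarith [hw.2.1, norm_lt_one_of_mem_carlesonBox hz],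
      by linarith [hz.2.1, norm_lt_one_of_mem_carlesonBox hw]⟩
  have hψφ : |ψ - φ| ≤ ℓ := abs_sub_le_iff.2 ⟨by linarith [hψ.2, hφ.1], by linarith [hψ.1, hφ.2]⟩
  calc ‖z - w‖ ≤ |‖z‖ - ‖w‖| + ‖w‖ * |ψ - φ| := by
        rw [hsplit]
        refine (norm_add_le _ _).trans (add_le_add ?_ ?_)
        · rw [norm_mul, norm_exp_ofReal_mul_I, mul_one, norm_real, Real.norm_eq_abs]
        · rw [norm_mul, norm_real, norm_norm]
          exact mul_le_mul_of_nonneg_left (norm_exp_mul_I_sub_exp_mul_I_le ψ φ) (norm_nonneg w)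
    _ ≤ ℓ + 1 * ℓ := by
        gcongr
        exact (norm_lt_one_of_mem_carlesonBox hw).le
    _ = 2 * ℓ := by ring

theorem exists_mul_conj_eq_of_mem_carlesonBox {s : ℝ} (hz : z ∈ carlesonBox s ℓ)
    (hw : w ∈ carlesonBox t ℓ) :
    ∃ β ∈ Ioo (s - t - ℓ) (s - t + ℓ), z * conj w = (‖z‖ * ‖w‖ : ℝ) * exp (β * I) := by
  obtain ⟨ψ, hψ, hzψ⟩ := exists_eq_norm_mul_exp_of_mem_carlesonBox hz
  obtain ⟨φ, hφ, hwφ⟩ := exists_eq_norm_mul_exp_of_mem_carlesonBox hw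
  refine ⟨ψ - φ, ⟨by linarith [hψ.1, hφ.2], by linarith [hψ.2, hφ.1]⟩, ?_⟩
  conv_lhs => rw [hzψ, hwφ]
  rw [map_mul, conj_ofReal, ← exp_conj, map_mul, conj_ofReal, conj_I]
  push_cast
  rw [mul_mul_mul_comm, ← exp_add]
  ring_nf

end CarlesonBox

theorem dA_ball (c : ℂ) (r : ℝ) : dA (Metric.ball c r) = ENNReal.ofReal r ^ 2 := by
  have hπ : ENNReal.ofReal π = NNReal.pi := by rw [← NNReal.coe_real_pi, ENNReal.ofReal_coe_nnreal]
  rw [dA, Measure.smul_apply, smul_eq_mul, Complex.volume_ball, hπ, mul_comm, mul_assoc,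
    ENNReal.mul_inv_cancel (by simp [NNReal.pi_ne_zero]) ENNReal.coe_ne_top, mul_one]

theorem dA_carlesonBox_ne_top (t ℓ : ℝ) : dA (carlesonBox t ℓ) ≠ ⊤ :=
  ne_top_of_le_ne_top (by rw [unitDisk, dA_ball]; simp)
    (measure_mono fun _ hz => hz.1 : _ ≤ dA unitDisk)

theorem ball_subset_carlesonBox {θ : ℝ} (hθ : 0 < θ) (hθ' : θ ≤ 2 / 5) :
    Metric.ball ((1 - θ / 2 : ℝ) * exp ((θ / 2 : ℝ) * I)) (θ / 8) ⊆ carlesonBox 0 θ := by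
  set c : ℂ := (1 - θ / 2 : ℝ) * exp ((θ / 2 : ℝ) * I) with hc
  intro x hx
  have hxc : ‖x - c‖ < θ / 8 := by rwa [← dist_eq]
  have hcn : ‖c‖ = 1 - θ / 2 := by
    rw [hc, norm_mul, norm_exp_ofReal_mul_I, mul_one, norm_real, Real.norm_of_nonneg (by linarith)]
  have hcre : c.re = (1 - θ / 2) * Real.cos (θ / 2) := by
    rw [hc, re_ofReal_mul, exp_ofReal_mul_I_re]
  have hcim : c.im = (1 - θ / 2) * Real.sin (θ / 2) := by
    rw [hc, im_ofReal_mul, exp_ofReal_mul_I_im]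
  have hre := (abs_le.1 ((abs_re_le_norm (x - c)).trans hxc.le)).1
  have him := abs_le.1 ((abs_im_le_norm (x - c)).trans hxc.le)
  rw [sub_re] at hre
  rw [sub_im] at him
  have hxn : |‖x‖ - ‖c‖| < θ / 8 := (abs_norm_sub_norm_le x c).trans_lt hxc
  rw [hcn] at hxn
  have hxn' := abs_lt.1 hxn
  have hcos := Real.one_sub_sq_div_two_le_cos (x := θ / 2)
  have hsin := Real.sin_gt_sub_cube (x := θ / 2) (by positivity)
  have hsinθ := Real.sin_gt_sub_cube hθ
  have hsin_le := Real.sin_le (x := θ / 2) (by positivity)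
  have hxre : 0 ≤ x.re := by nlinarith
  have hxim : 0 ≤ x.im := by nlinarith
  have hx0 : x ≠ 0 := fun h => by simp [h] at hxn'; linarith
  refine mem_carlesonBox_of_arg_mem hx0 (by linarith) (by linarith)
    ⟨arg_nonneg_iff.2 hxim, ?_⟩
  rw [zero_add, arg_of_re_nonneg hxre,
    Real.arcsin_lt_iff_lt_sin' ⟨by linarith [Real.pi_pos], by linarith [Real.pi_gt_three]⟩,
    div_lt_iff₀ (norm_pos_iff.2 hx0)]
  -- `x.im < 5θ/8` and `‖x‖ > 1 - 5θ/8`, while `sin θ > θ - θ³/6`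
  nlinarith

theorem sq_le_dA_carlesonBox {θ : ℝ} (hθ : 0 < θ) (hθ' : θ ≤ 2 / 5) :
    (θ / 8) ^ 2 ≤ (dA (carlesonBox 0 θ)).toReal := by
  have h := ENNReal.toReal_mono (dA_carlesonBox_ne_top 0 θ)
    (measure_mono (μ := dA) (ball_subset_carlesonBox hθ hθ'))
  rwa [dA_ball, ENNReal.toReal_pow, ENNReal.toReal_ofReal (by positivity)] at h

theorem div_rpow_dA_carlesonBox_le {α θ C : ℝ} (hα : 0 ≤ α) (hθ : 0 < θ) (hθ' : θ ≤ 2 / 5)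
    (hC : 0 ≤ C) : C / (dA (carlesonBox 0 θ)).toReal ^ (α / 2) ≤ C * (θ / 8) ^ (-α) := by
  have hQ : (θ / 8) ^ α ≤ (dA (carlesonBox 0 θ)).toReal ^ (α / 2) :=
    calc (θ / 8) ^ α = ((θ / 8) ^ 2) ^ (α / 2) := by
          rw [← Real.rpow_natCast, ← Real.rpow_mul (by positivity)]; ring_nf
      _ ≤ _ := Real.rpow_le_rpow (by positivity) (sq_le_dA_carlesonBox hθ hθ') (by positivity)
  rw [Real.rpow_neg (by positivity), ← div_eq_mul_inv]
  exact div_le_div_of_nonneg_left hC (by positivity) hQ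

section Separated

variable {α d θ : ℝ} {z w w₀ : ℂ}

theorem le_im_mul_conj_of_mem_carlesonBox (hd : 3 ≤ d) (hθ : 0 < θ)
    (hdθ : (d + 1) * θ < π / 2) (hz : z ∈ carlesonBox (d * θ) θ) (hw : w ∈ carlesonBox 0 θ) :
    d * θ / 15 ≤ (z * conj w).im := by
  obtain ⟨β, hβ, hzw⟩ := exists_mul_conj_eq_of_mem_carlesonBox hz hw
  rw [hzw, im_ofReal_mul, exp_ofReal_mul_I_im]
  have hθ' : θ ≤ 2 / 5 := by nlinarith [Real.pi_lt_d2]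
  have hP : 1 - 2 * θ ≤ ‖z‖ * ‖w‖ := by nlinarith [hz.2.1, hw.2.1]
  have hβ0 : 0 ≤ β := by nlinarith [hβ.1]
  have hsin : β / 2 ≤ Real.sin β :=
    calc β / 2 ≤ 2 / π * β := by
          rw [div_mul_eq_mul_div, le_div_iff₀ Real.pi_pos]; nlinarith [Real.pi_le_four]
      _ ≤ Real.sin β := Real.mul_le_sin hβ0 (by linarith [hβ.2])
  have hβd : d * θ / 3 ≤ β / 2 := by nlinarith [hβ.1]
  calc d * θ / 15 = 1 / 5 * (d * θ / 3) := by ring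
    _ ≤ ‖z‖ * ‖w‖ * Real.sin β :=
        mul_le_mul (by linarith) (hβd.trans hsin) (by positivity) (by positivity)

theorem le_norm_one_sub_mul_conj_of_mem_carlesonBox (hd : 3 ≤ d) (hθ : 0 < θ)
    (hdθ : (d + 1) * θ < π / 2) (hz : z ∈ carlesonBox (d * θ) θ) (hw : w ∈ carlesonBox 0 θ) :
    d * θ / 15 ≤ ‖1 - z * conj w‖ :=
  calc d * θ / 15 ≤ -(1 - z * conj w).im := by
        rw [sub_im, one_im, zero_sub, neg_neg]
        exact le_im_mul_conj_of_mem_carlesonBox hd hθ hdθ hz hw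
    _ ≤ ‖1 - z * conj w‖ := (neg_le_abs _).trans (abs_im_le_norm _)

theorem norm_one_sub_mul_conj_le_of_mem_carlesonBox (hd : 0 ≤ d)
    (hz : z ∈ carlesonBox (d * θ) θ) (hw : w ∈ carlesonBox 0 θ) :
    ‖1 - z * conj w‖ ≤ (d + 3) * θ := by
  obtain ⟨β, hβ, hzw⟩ := exists_mul_conj_eq_of_mem_carlesonBox hz hw
  have hz1 := norm_lt_one_of_mem_carlesonBox hz
  have hw1 := norm_lt_one_of_mem_carlesonBox hw
  have hθ : 0 < θ := by linarith [hz.2.1]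
  have hP : 1 - 2 * θ ≤ ‖z‖ * ‖w‖ := by
    nlinarith [hz.2.1, hw.2.1, norm_nonneg z, norm_nonneg w]
  have hβ' : |β| ≤ (d + 1) * θ := abs_le.2 ⟨by nlinarith [hβ.1], by linarith [hβ.2]⟩
  rw [hzw]
  calc _ ≤ 1 - ‖z‖ * ‖w‖ + |β| :=
        norm_one_sub_ofReal_mul_exp_le (by positivity) (by nlinarith [norm_nonneg z]) β
    _ ≤ (d + 3) * θ := by linarith

theorem norm_kernel_le (hα : 0 ≤ α) (hd : 3 ≤ d) (hθ : 0 < θ) (hdθ : (d + 1) * θ < π / 2)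
    (hz : z ∈ carlesonBox (d * θ) θ) (hw : w ∈ carlesonBox 0 θ) :
    ‖(1 - z * conj w) ^ (-(α : ℂ))‖ ≤ (d * θ / 15) ^ (-α) := by
  rw [norm_cpow_neg_ofReal]
  exact Real.rpow_le_rpow_of_nonpos (by positivity)
    (le_norm_one_sub_mul_conj_of_mem_carlesonBox hd hθ hdθ hz hw) (by linarith)

theorem norm_log_one_sub_mul_conj_sub_le (hd : 3 ≤ d) (hθ : 0 < θ)
    (hdθ : (d + 1) * θ < π / 2) (hz : z ∈ carlesonBox (d * θ) θ) (hw : w ∈ carlesonBox 0 θ)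
    (hw₀ : w₀ ∈ carlesonBox 0 θ) :
    ‖log (1 - z * conj w) - log (1 - z * conj w₀)‖ ≤ 30 / d := by
  have hδ : 0 < d * θ / 15 := by positivity
  let s : Set ℂ := {ζ | ζ.im ≤ -(d * θ / 15)}
  have hmem : ∀ w ∈ carlesonBox 0 θ, 1 - z * conj w ∈ s := fun w hw => by
    show (1 - z * conj w).im ≤ _
    rw [sub_im, one_im]
    linarith [le_im_mul_conj_of_mem_carlesonBox hd hθ hdθ hz hw]
  have hδs : ∀ ζ ∈ s, d * θ / 15 ≤ ‖ζ‖ := fun ζ hζ =>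
    (le_neg.1 hζ).trans ((neg_le_abs _).trans (abs_im_le_norm ζ))
  have hslit : s ⊆ slitPlane := fun ζ hζ =>
    mem_slitPlane_iff.2 (Or.inr (ne_of_lt (hζ.trans_lt (by linarith))))
  have hdiff : ‖(1 - z * conj w) - (1 - z * conj w₀)‖ ≤ 2 * θ := by
    rw [sub_sub_sub_cancel_left, ← mul_sub, ← map_sub, norm_mul, RCLike.norm_conj]
    exact (mul_le_of_le_one_left (norm_nonneg _) (norm_lt_one_of_mem_carlesonBox hz).le).trans
      (norm_sub_le_of_mem_carlesonBox hw₀ hw)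
  calc _ ≤ ‖(1 - z * conj w) - (1 - z * conj w₀)‖ / (d * θ / 15) :=
        (convex_halfSpace_im_le _).norm_log_sub_log_le hslit hδ hδs (hmem w hw) (hmem w₀ hw₀)
    _ ≤ 2 * θ / (d * θ / 15) := by gcongr
    _ = 30 / d := by field_simp; ring

theorem half_rpow_le_re_kernel (hα : 0 ≤ α) (hd : 3 ≤ d) (hdα : 30 * α ≤ d) (hθ : 0 < θ)
    (hdθ : (d + 1) * θ < π / 2) (hz : z ∈ carlesonBox (d * θ) θ) (hw : w ∈ carlesonBox 0 θ)
    (hw₀ : w₀ ∈ carlesonBox 0 θ) :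
    ((d + 3) * θ) ^ (-α) / 2 ≤
      (exp (-(log (1 - z * conj w₀) * -α).im * I) * (1 - z * conj w) ^ (-(α : ℂ))).re := by
  have harg : |(log (1 - z * conj w) * -α).im - (log (1 - z * conj w₀) * -α).im| ≤ 1 := by
    have hmul_im : ∀ ζ : ℂ, (ζ * -α).im = -α * ζ.im := fun ζ => by simp [mul_comm]
    rw [hmul_im, hmul_im, ← mul_sub, ← sub_im, abs_mul, abs_neg, abs_of_nonneg hα]
    calc α * |(log (1 - z * conj w) - log (1 - z * conj w₀)).im| ≤ α * (30 / d) :=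
          mul_le_mul_of_nonneg_left ((abs_im_le_norm _).trans
            (norm_log_one_sub_mul_conj_sub_le hd hθ hdθ hz hw hw₀)) hα
      _ ≤ 1 := by rw [mul_div_assoc', div_le_one (by linarith)]; linarith
  have hu : 0 < ‖1 - z * conj w‖ :=
    lt_of_lt_of_le (by positivity) (le_norm_one_sub_mul_conj_of_mem_carlesonBox hd hθ hdθ hz hw)
  have hu0 : 1 - z * conj w ≠ 0 := norm_pos_iff.1 hu
  calc ((d + 3) * θ) ^ (-α) / 2 ≤ ‖1 - z * conj w‖ ^ (-α) / 2 :=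
        div_le_div_of_nonneg_right (Real.rpow_le_rpow_of_nonpos hu
          (norm_one_sub_mul_conj_le_of_mem_carlesonBox (by linarith) hz hw) (by linarith))
          zero_le_two
    _ = ‖exp (log (1 - z * conj w) * -α)‖ / 2 := by
        rw [← cpow_def_of_ne_zero hu0, norm_cpow_neg_ofReal]
    _ ≤ _ := by
        rw [cpow_def_of_ne_zero hu0]
        linarith [norm_exp_le_two_mul_re_of_abs_im_sub_le harg]

end Separated

/-- Key geometric lemma: for `α > 0` there are `C₁ > 0` (depending only on `α`) and an
integer `d > 2` so that for every small `θ`, with `I = (0,θ)` and `J = (dθ,(d+1)θ)`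
(arcs of the same length), every nonnegative integrable `g` supported in `Q_I` and
every `z ∈ Q_J` satisfy `|(K_α g)(z)| ≥ C₁ |Q_I|^{-α/2} ∫ g dA`. -/
theorem stmt4 (α : ℝ) (hα : 0 < α) :
    ∃ C₁ : ℝ, 0 < C₁ ∧ ∃ d : ℕ, 2 < d ∧
      ∀ θ : ℝ, 0 < θ → ((d : ℝ) + 1) * θ < π / 2 →
        ∀ g : ℂ → ℝ, 0 ≤ g → IntegrableOn g unitDisk dA →
          (∀ w, w ∉ carlesonBox 0 θ → g w = 0) →
          ∀ z ∈ carlesonBox ((d : ℝ) * θ) θ,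
            C₁ / (dA (carlesonBox 0 θ)).toReal ^ (α / 2) * (∫ w in unitDisk, g w ∂dA) ≤
              ‖Kop α (fun w => (g w : ℂ)) z‖ := by
  obtain ⟨d, hd3, hdα⟩ : ∃ d : ℕ, 3 ≤ d ∧ 30 * α ≤ d :=
    ⟨max 3 ⌈30 * α⌉₊, le_max_left _ _, (Nat.le_ceil _).trans (by exact_mod_cast le_max_right _ _)⟩
  refine ⟨(8 * (d + 3)) ^ (-α) / 2, by positivity, d, by omega, ?_⟩
  intro θ hθ hdθ g hg0 hg hgS z hz
  have hd : (3 : ℝ) ≤ d := by exact_mod_cast hd3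
  have hθ' : θ ≤ 2 / 5 := by nlinarith [Real.pi_lt_d2]
  have hw₀ : ((1 - θ / 2 : ℝ) * exp ((θ / 2 : ℝ) * I) : ℂ) ∈ carlesonBox 0 θ :=
    ball_subset_carlesonBox hθ hθ' (Metric.mem_ball_self (by positivity))
  have hconst : (8 * (d + 3)) ^ (-α) / 2 * (θ / 8) ^ (-α) = ((d + 3) * θ) ^ (-α) / 2 := by
    rw [div_mul_eq_mul_div, ← Real.mul_rpow (by positivity) (by positivity)]
    ring_nf
  calc _ ≤ ((d + 3) * θ) ^ (-α) / 2 * ∫ w in unitDisk, g w ∂dA := by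
        rw [← hconst]
        exact mul_le_mul_of_nonneg_right
          (div_rpow_dA_carlesonBox_le hα.le hθ hθ' (by positivity)) (integral_nonneg hg0)
    _ ≤ _ := mul_integral_le_norm_integral_mul (by rw [← ofReal_neg, norm_exp_ofReal_mul_I])
        hg0 hg (by fun_prop : Measurable _).aestronglyMeasurable hgS
        (fun w hw => norm_kernel_le hα.le hd hθ hdθ hz hw)
        (fun w hw => half_rpow_le_re_kernel hα.le hd hdα hθ hdθ hz hw hw₀)
end
end

section
/- Fix d > 2 and θ > 0 with (d+1)θ < π/2, and set I = (0,θ), J = (dθ,(d+1)θ) as arcs of 𝕋. Then for every z = r₁e^{iξ₁} ∈ Q_J and λ = r₂e^{iξ₂} ∈ Q_I, one has |1 − z·conj(λ)| ≥ a(d−1)θ, where a = (2/√π)(1 − π/6). -/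
/-!
Writing `z = |z| e^{i s}` and `λ = |λ| e^{i t}`, the point `z λ̄` lies on the line through `0` in
direction `e^{i(s - t)}`, whose distance from `1` is `|sin (s - t)|`; so `|1 - z λ̄| ≥ |sin (s - t)|`
whatever the moduli. For `z ∈ Q_J`, `λ ∈ Q_I` the angle `s - t` lies in `[(d - 1)θ, π/2]`, where
Jordan's inequality `sin x ≥ 2x/π` applies, and `a ≤ 2/π` numerically.
-/

open MeasureTheory Complex Set
open scoped ENNReal Real

noncomputable section

lemma abs_sin_le_norm_one_sub_ofReal_mul_exp (r ξ : ℝ) :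
    |Real.sin ξ| ≤ ‖1 - (r : ℂ) * exp (ξ * I)‖ := by
  have hrot : exp ((-ξ : ℝ) * I) * (1 - r * exp (ξ * I)) = exp ((-ξ : ℝ) * I) - r := by
    rw [mul_sub, mul_one, mul_left_comm, ← exp_add]
    push_cast
    simp
  calc |Real.sin ξ| = |(exp ((-ξ : ℝ) * I) - r).im| := by
        rw [sub_im, exp_ofReal_mul_I_im, ofReal_im, sub_zero, Real.sin_neg, abs_neg]
    _ ≤ ‖exp ((-ξ : ℝ) * I) - r‖ := abs_im_le_norm _
    _ = ‖1 - r * exp (ξ * I)‖ := by rw [← hrot, norm_mul, norm_exp_ofReal_mul_I, one_mul]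

lemma eq_norm_mul_exp_of_div_norm_eq_exp {z : ℂ} {t : ℝ} (hz : z / ‖z‖ = exp (t * I)) :
    z = ‖z‖ * exp (t * I) := by
  have hz0 : (‖z‖ : ℂ) ≠ 0 := by
    rintro h
    rw [h, div_zero] at hz
    exact exp_ne_zero _ hz.symm
  rw [← hz, mul_div_cancel₀ _ hz0]

lemma mul_conj_eq_of_div_norm_eq_exp {z w : ℂ} {s t : ℝ} (hz : z / ‖z‖ = exp (s * I))
    (hw : w / ‖w‖ = exp (t * I)) :
    z * starRingEnd ℂ w = (‖z‖ * ‖w‖ : ℝ) * exp ((s - t : ℝ) * I) := by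
  conv_lhs => rw [eq_norm_mul_exp_of_div_norm_eq_exp hz, eq_norm_mul_exp_of_div_norm_eq_exp hw]
  rw [map_mul, ← exp_conj, map_mul, conj_ofReal, conj_ofReal, conj_I, mul_mul_mul_comm, ← exp_add]
  push_cast
  ring_nf

lemma abs_sin_sub_le_norm_one_sub_mul_conj {z w : ℂ} {s t : ℝ} (hz : z / ‖z‖ = exp (s * I))
    (hw : w / ‖w‖ = exp (t * I)) :
    |Real.sin (s - t)| ≤ ‖1 - z * starRingEnd ℂ w‖ := by
  rw [mul_conj_eq_of_div_norm_eq_exp hz hw]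
  exact abs_sin_le_norm_one_sub_ofReal_mul_exp _ _

lemma two_div_sqrt_pi_mul_one_sub_pi_div_six_le : 2 / √π * (1 - π / 6) ≤ 2 / π := by
  have hsqrt : √π < 2 := by
    rw [Real.sqrt_lt' two_pos]; linarith [Real.pi_lt_four]
  have hpi := Real.pi_gt_three
  have hs0 : 0 < √π := Real.sqrt_pos.mpr Real.pi_pos
  calc 2 / √π * (1 - π / 6) = 2 / π * (√π * (1 - π / 6)) := by
        field_simp
        rw [Real.sq_sqrt Real.pi_pos.le]
    _ ≤ 2 / π * 1 := by gcongr; nlinarith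
    _ = 2 / π := mul_one _

/-- For `d > 2` and `(d+1)θ < π/2`, with `I = (0,θ)` and `J = (dθ,(d+1)θ)`,
every `z ∈ Q_J` and `λ ∈ Q_I` satisfy `|1 - z λ̄| ≥ a (d-1) θ`
where `a = (2/√π)(1 - π/6)`. -/
theorem stmt5 (d θ : ℝ) (hd : 2 < d) (hθ : 0 < θ) (h : (d + 1) * θ < π / 2) :
    ∀ z ∈ carlesonBox (d * θ) θ, ∀ w ∈ carlesonBox 0 θ,
      2 / Real.sqrt π * (1 - π / 6) * ((d - 1) * θ) ≤ ‖1 - z * (starRingEnd ℂ) w‖ := by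
  rintro z ⟨-, -, s, ⟨hs₁, hs₂⟩, hz⟩ w ⟨-, -, t, ⟨ht₁, ht₂⟩, hw⟩
  have hangle₀ : 0 ≤ (d - 1) * θ := by nlinarith
  have hangle₁ : (d - 1) * θ ≤ s - t := by linarith
  have hangle₂ : s - t ≤ π / 2 := by linarith
  calc 2 / √π * (1 - π / 6) * ((d - 1) * θ)
      ≤ 2 / π * ((d - 1) * θ) := by gcongr; exact two_div_sqrt_pi_mul_one_sub_pi_div_six_le
    _ ≤ Real.sin ((d - 1) * θ) := Real.mul_le_sin hangle₀ (hangle₁.trans hangle₂)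
    _ ≤ Real.sin (s - t) :=
        Real.sin_le_sin_of_le_of_le_pi_div_two (by linarith [Real.pi_pos]) hangle₂ hangle₁
    _ ≤ |Real.sin (s - t)| := le_abs_self _
    _ ≤ ‖1 - z * starRingEnd ℂ w‖ := abs_sin_sub_le_norm_one_sub_mul_conj hz hw
end
end
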